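/- arXiv:2406.15926 — 3 statements merged into one kernel-verified Lean document; each statement's English description precedes it below -/
import Mathlib

section
/- Let λ_1, …, λ_{s_1} be the distinct eigenvalues of a real symmetric matrix A_1 (of size n_1) and μ_1, …, μ_{s_2} those of a real symmetric matrix A_2 (of size n_2). If all sums λ_j + μ_k (j ∈ [s_1], k ∈ [s_2]) are pairwise distinct, then A_1 ⊗ I_{n_2} lies in the subalgebra of matrices generated by the powers of A := A_1 ⊗ I_{n_2} + I_{n_1} ⊗ A_2; that is, A_1 ⊗ I_{n_2} is a polynomial in A. -/
open Kronecker Matrix Polynomial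

lemma aeval_conj {n : Type*} [Fintype n] [DecidableEq n]
    (U V D : Matrix n n ℝ) (hUV : U * V = 1) (hVU : V * U = 1) (p : ℝ[X]) :
    aeval (U * D * V) p = U * aeval D p * V := by
  induction p using Polynomial.induction_on with
  | C a => simp [Algebra.algebraMap_eq_smul_one, Matrix.mul_smul, Matrix.smul_mul, hUV]
  | add p q hp hq => simp [hp, hq, Matrix.mul_add, Matrix.add_mul]
  | monomial k a h =>
      have hpow : ∀ m : ℕ, (U * D * V) ^ m = U * D ^ m * V := by
        intro m
        induction m with
        | zero => simp [hUV]
        | succ m ih =>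
            rw [pow_succ, pow_succ, ih]
            simp only [Matrix.mul_assoc]
            rw [← Matrix.mul_assoc V U, hVU, Matrix.one_mul]
      simp only [_root_.map_mul, map_pow, aeval_C, aeval_X, hpow]
      simp [Algebra.algebraMap_eq_smul_one, Matrix.smul_mul, Matrix.mul_smul,
        Matrix.mul_assoc, hUV]

lemma aeval_diag {n : Type*} [Fintype n] [DecidableEq n] (d : n → ℝ) (p : ℝ[X]) :
    aeval (Matrix.diagonal d) p = Matrix.diagonal (fun i => p.eval (d i)) := by
  have h1 : aeval (Matrix.diagonal d) p = (diagonalAlgHom (n := n) ℝ) (aeval d p) :=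
    aeval_algHom_apply (diagonalAlgHom (n := n) ℝ) d p
  have h2 : ∀ i, (aeval d p) i = p.eval (d i) := by
    intro i
    have h3 := aeval_algHom_apply (Pi.evalAlgHom ℝ (fun _ : n => ℝ) i) d p
    simp only [Pi.evalAlgHom_apply] at h3
    rw [← h3, ← coe_aeval_eq_eval]
  rw [h1]
  have : (aeval d p) = fun i => p.eval (d i) := funext h2
  rw [this]
  rfl

/-- If all sums `λ_j + μ_k` of distinct eigenvalues of the real symmetric matrices
`A₁` and `A₂` are pairwise distinct, then `A₁ ⊗ I` is a polynomial in
`A = A₁ ⊗ I + I ⊗ A₂`. -/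
theorem kron_summand_is_polynomial_in_kron_sum
    (n1 n2 s1 s2 : ℕ)
    (A1 : Matrix (Fin n1) (Fin n1) ℝ) (A2 : Matrix (Fin n2) (Fin n2) ℝ)
    (h1 : A1.IsSymm) (h2 : A2.IsSymm)
    (lam : Fin s1 → ℝ) (mu : Fin s2 → ℝ)
    (hlam : Function.Injective lam) (hmu : Function.Injective mu)
    (hspec1 : spectrum ℝ A1 = Set.range lam)
    (hspec2 : spectrum ℝ A2 = Set.range mu)
    (hdist : Function.Injective (fun jk : Fin s1 × Fin s2 => lam jk.1 + mu jk.2)) :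
    ∃ p : Polynomial ℝ,
      Polynomial.aeval
          (A1 ⊗ₖ (1 : Matrix (Fin n2) (Fin n2) ℝ) +
           (1 : Matrix (Fin n1) (Fin n1) ℝ) ⊗ₖ A2) p
        = A1 ⊗ₖ (1 : Matrix (Fin n2) (Fin n2) ℝ) := by
  have hH1 : A1.IsHermitian := by
    rwa [Matrix.IsHermitian, conjTranspose_eq_transpose_of_trivial]
  have hH2 : A2.IsHermitian := by
    rwa [Matrix.IsHermitian, conjTranspose_eq_transpose_of_trivial]
  set U1 : Matrix (Fin n1) (Fin n1) ℝ := (hH1.eigenvectorUnitary : Matrix (Fin n1) (Fin n1) ℝ) with hU1def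
  set U2 : Matrix (Fin n2) (Fin n2) ℝ := (hH2.eigenvectorUnitary : Matrix (Fin n2) (Fin n2) ℝ) with hU2def
  set d1 : Fin n1 → ℝ := hH1.eigenvalues
  set d2 : Fin n2 → ℝ := hH2.eigenvalues
  have hU1 : U1 * star U1 = 1 := mem_unitaryGroup_iff.mp (IsHermitian.eigenvectorUnitary hH1).2
  have hU1' : star U1 * U1 = 1 := mem_unitaryGroup_iff'.mp (IsHermitian.eigenvectorUnitary hH1).2
  have hU2 : U2 * star U2 = 1 := mem_unitaryGroup_iff.mp (IsHermitian.eigenvectorUnitary hH2).2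
  have hU2' : star U2 * U2 = 1 := mem_unitaryGroup_iff'.mp (IsHermitian.eigenvectorUnitary hH2).2
  have hA1 : A1 = U1 * diagonal d1 * star U1 := by
    have := hH1.spectral_theorem
    simpa using this
  have hA2 : A2 = U2 * diagonal d2 * star U2 := by
    have := hH2.spectral_theorem
    simpa using this
  set U : Matrix (Fin n1 × Fin n2) (Fin n1 × Fin n2) ℝ := U1 ⊗ₖ U2
  set V : Matrix (Fin n1 × Fin n2) (Fin n1 × Fin n2) ℝ := star U1 ⊗ₖ star U2
  have hUV : U * V = 1 := by
    rw [← mul_kronecker_mul, hU1, hU2, one_kronecker_one]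
  have hVU : V * U = 1 := by
    rw [← mul_kronecker_mul, hU1', hU2', one_kronecker_one]
  have hB1 : A1 ⊗ₖ (1 : Matrix (Fin n2) (Fin n2) ℝ)
      = U * (diagonal (fun ii : Fin n1 × Fin n2 => d1 ii.1)) * V := by
    have h1' : (1 : Matrix (Fin n2) (Fin n2) ℝ) = U2 * 1 * star U2 := by
      rw [Matrix.mul_one, hU2]
    conv_lhs => rw [hA1, h1']
    rw [mul_kronecker_mul, mul_kronecker_mul]
    congr 1
    have : (diagonal d1) ⊗ₖ (1 : Matrix (Fin n2) (Fin n2) ℝ)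
        = diagonal (fun ii : Fin n1 × Fin n2 => d1 ii.1) := by
      rw [← Matrix.diagonal_one, diagonal_kronecker_diagonal]
      simp
    rw [this]
  have hB2 : (1 : Matrix (Fin n1) (Fin n1) ℝ) ⊗ₖ A2
      = U * (diagonal (fun ii : Fin n1 × Fin n2 => d2 ii.2)) * V := by
    have h1' : (1 : Matrix (Fin n1) (Fin n1) ℝ) = U1 * 1 * star U1 := by
      rw [Matrix.mul_one, hU1]
    conv_lhs => rw [hA2, h1']
    rw [mul_kronecker_mul, mul_kronecker_mul]
    congr 1
    have : (1 : Matrix (Fin n1) (Fin n1) ℝ) ⊗ₖ (diagonal d2)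
        = diagonal (fun ii : Fin n1 × Fin n2 => d2 ii.2) := by
      rw [← Matrix.diagonal_one, diagonal_kronecker_diagonal]
      simp
    rw [this]
  -- the interpolating polynomial
  set ν : Fin s1 × Fin s2 → ℝ := fun jk => lam jk.1 + mu jk.2
  have hinj : Set.InjOn ν (Finset.univ : Finset (Fin s1 × Fin s2)) := fun a _ b _ h => hdist h
  set p : ℝ[X] := Lagrange.interpolate Finset.univ ν (fun jk => lam jk.1) with hp
  have key : ∀ (i : Fin n1) (i' : Fin n2), p.eval (d1 i + d2 i') = d1 i := by
    intro i i'
    have hm1 : d1 i ∈ Set.range lam := by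
      rw [← hspec1]; exact hH1.eigenvalues_mem_spectrum_real i
    have hm2 : d2 i' ∈ Set.range mu := by
      rw [← hspec2]; exact hH2.eigenvalues_mem_spectrum_real i'
    obtain ⟨j, hj⟩ := hm1
    obtain ⟨k, hk⟩ := hm2
    rw [← hj, ← hk]
    exact Lagrange.eval_interpolate_at_node _ hinj (Finset.mem_univ (j, k))
  refine ⟨p, ?_⟩
  have hsum : U * diagonal (fun ii : Fin n1 × Fin n2 => d1 ii.1) * V
      + U * diagonal (fun ii : Fin n1 × Fin n2 => d2 ii.2) * V
      = U * diagonal (fun ii : Fin n1 × Fin n2 => d1 ii.1 + d2 ii.2) * V := by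
    rw [← Matrix.add_mul, ← Matrix.mul_add, diagonal_add]
  rw [hB1, hB2, hsum, aeval_conj U V _ hUV hVU, aeval_diag]
  have heq : (fun ii : Fin n1 × Fin n2 => p.eval (d1 ii.1 + d2 ii.2)) = fun ii => d1 ii.1 :=
    funext fun ii => key ii.1 ii.2
  rw [heq]
end

section
/- If equality holds in the Ratio-type bound α_k(Γ) ≤ n (W(p) − λ(p)) / (p(λ_1) − λ(p)) for a k-independent set U, then W(p) = (1/|U|) Σ_{u∈U} (p(A))_{uu}, i.e., the maximum diagonal entry of p(A) equals its average over U. -/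
/-!
Let `x` be the indicator vector of `U` and `M = p(A)`. Since `U` is `k`-independent and
`deg p ≤ k`, `M` vanishes off the diagonal on `U × U`, so `xᵀ M x = ∑_{u ∈ U} M_uu ≤ |U| W`.
Splitting `x` along the all-ones eigenvector (eigenvalue `r = λ₁`) and its orthogonal complement,
on which the quadratic form of `M` is at least `λ(p)`, gives
`xᵀ M x ≥ λ(p) |U| + (p(λ₁) - λ(p)) |U|² / n`. Equality in the ratio bound makes this lower bound
equal to `|U| W`, so `∑_{u ∈ U} M_uu = |U| W`.
-/

open Polynomial Matrix

lemma Matrix.aeval_mulVec_of_mulVec_eq_smul {K V : Type*} [Field K] [Fintype V] [DecidableEq V]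
    {A : Matrix V V K} {μ : K} {w : V → K} (hw : A *ᵥ w = μ • w) (q : K[X]) :
    aeval A q *ᵥ w = q.eval μ • w := by
  obtain rfl | hw₀ := eq_or_ne w 0
  · simp
  have h : Module.End.HasEigenvector (toLin' A) μ w :=
    Module.End.hasEigenvector_iff.mpr ⟨Module.End.mem_eigenspace_iff.mpr (by simpa using hw), hw₀⟩
  have := Module.End.aeval_apply_of_hasEigenvector (p := q) h
  rwa [show toLin' A = toLinAlgEquiv' A from rfl, ← AlgEquiv.coe_toAlgHom,
    Polynomial.aeval_algHom_apply] at this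

namespace Matrix.IsHermitian

variable {V : Type*} [Fintype V] [DecidableEq V] {A : Matrix V V ℝ} (hA : A.IsHermitian)

lemma eigenvalues₀_eq_of_charpoly_eq_prod {lam : Fin (Fintype.card V) → ℝ} (hlam : Antitone lam)
    (h : A.charpoly = ∏ i, (X - C (lam i))) : hA.eigenvalues₀ = lam := by
  have hroots : A.charpoly.roots = Multiset.map lam Finset.univ.val := by
    rw [h, roots_prod _ _ (by simp [Finset.prod_ne_zero_iff, X_sub_C_ne_zero])]
    simp only [roots_X_sub_C, Multiset.bind_singleton]
  have hsort := hA.sort_roots_charpoly_eq_eigenvalues₀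
  simp only [hroots, Fin.univ_val_map, Multiset.map_coe, List.map_ofFn, Function.comp_def,
    RCLike.re_to_real, Multiset.coe_sort] at hsort
  rw [← List.ofFn_inj, ← hsort]
  apply List.mergeSort_of_pairwise
  simp_rw [decide_eq_true_eq, ← List.sortedGE_iff_pairwise]
  exact hlam.sortedGE_ofFn

noncomputable def eigenCoeffs (x : V → ℝ) : V → ℝ :=
  star (hA.eigenvectorUnitary : Matrix V V ℝ) *ᵥ x

lemma star_eigenvectorUnitary_mul_aeval (q : ℝ[X]) :
    star (hA.eigenvectorUnitary : Matrix V V ℝ) * aeval A q =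
      diagonal (fun i => q.eval (hA.eigenvalues i)) *
        star (hA.eigenvectorUnitary : Matrix V V ℝ) := by
  rw [← cfc_polynomial q A hA.isSelfAdjoint, hA.cfc_eq, IsHermitian.cfc,
    Unitary.conjStarAlgAut_apply, ← mul_assoc, ← mul_assoc, Unitary.coe_star_mul_self, one_mul]
  rfl

lemma eigenCoeffs_aeval_mulVec (q : ℝ[X]) (x : V → ℝ) :
    hA.eigenCoeffs (aeval A q *ᵥ x) = fun i => q.eval (hA.eigenvalues i) * hA.eigenCoeffs x i := by
  ext i
  rw [eigenCoeffs, mulVec_mulVec, star_eigenvectorUnitary_mul_aeval, ← mulVec_mulVec,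
    mulVec_diagonal, eigenCoeffs]

lemma dotProduct_eigenCoeffs (x y : V → ℝ) : hA.eigenCoeffs x ⬝ᵥ hA.eigenCoeffs y = x ⬝ᵥ y := by
  have hstar : star (hA.eigenvectorUnitary : Matrix V V ℝ) =
      (hA.eigenvectorUnitary : Matrix V V ℝ)ᵀ :=
    conjTranspose_eq_transpose_of_trivial _
  rw [eigenCoeffs, eigenCoeffs, dotProduct_mulVec, ← vecMul_transpose, vecMul_vecMul, hstar,
    transpose_transpose, ← hstar, Unitary.mul_star_self_of_mem hA.eigenvectorUnitary.2, vecMul_one]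

lemma dotProduct_aeval_mulVec (q : ℝ[X]) (x y : V → ℝ) :
    x ⬝ᵥ (aeval A q *ᵥ y) =
      ∑ i, q.eval (hA.eigenvalues i) * (hA.eigenCoeffs x i * hA.eigenCoeffs y i) := by
  rw [← hA.dotProduct_eigenCoeffs, eigenCoeffs_aeval_mulVec, dotProduct]
  exact Finset.sum_congr rfl fun i _ => by ring

lemma eigenCoeffs_eq_zero_of_mulVec_eq_smul {μ : ℝ} {w : V → ℝ} (hw : A *ᵥ w = μ • w) {i : V}
    (hi : hA.eigenvalues i ≠ μ) : hA.eigenCoeffs w i = 0 := by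
  have h := congrFun (hA.eigenCoeffs_aeval_mulVec X w) i
  rw [aeval_X, hw, eigenCoeffs, mulVec_smul, ← eigenCoeffs, eval_X] at h
  have : (hA.eigenvalues i - μ) * hA.eigenCoeffs w i = 0 := by
    simp only [Pi.smul_apply, smul_eq_mul] at h
    linarith
  exact (mul_eq_zero.mp this).resolve_left (sub_ne_zero.mpr hi)

/-- If the eigenvalue at `i₀` is repeated, the repeat gives `l ≤ q (eigenvalues i₀)`; otherwise
`w` spans its eigenspace and `y ⊥ w` has no component there. -/
lemma mul_dotProduct_self_le_of_dotProduct_eq_zero {i₀ : V} {w : V → ℝ}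
    (hw : A *ᵥ w = hA.eigenvalues i₀ • w) (hw₀ : w ≠ 0) {q : ℝ[X]} {l : ℝ}
    (hl : ∀ i ≠ i₀, l ≤ q.eval (hA.eigenvalues i)) {y : V → ℝ} (hy : w ⬝ᵥ y = 0) :
    l * (y ⬝ᵥ y) ≤ y ⬝ᵥ (aeval A q *ᵥ y) := by
  have hyy : y ⬝ᵥ y = ∑ i, hA.eigenCoeffs y i * hA.eigenCoeffs y i := by
    rw [← hA.dotProduct_eigenCoeffs, dotProduct]
  rw [hyy, hA.dotProduct_aeval_mulVec, Finset.mul_sum]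
  refine Finset.sum_le_sum fun i _ => ?_
  suffices l ≤ q.eval (hA.eigenvalues i) ∨ hA.eigenCoeffs y i = 0 by
    rcases this with h | h
    · exact mul_le_mul_of_nonneg_right h (mul_self_nonneg _)
    · simp [h]
  obtain hi | rfl := ne_or_eq i i₀
  · exact .inl (hl i hi)
  by_cases hrepeat : ∃ j ≠ i, hA.eigenvalues j = hA.eigenvalues i
  · obtain ⟨j, hj, hji⟩ := hrepeat
    exact .inl (hji ▸ hl j hj)
  push Not at hrepeat
  right
  have hsum : ∀ z : V → ℝ, w ⬝ᵥ z = hA.eigenCoeffs w i * hA.eigenCoeffs z i := fun z => by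
    rw [← hA.dotProduct_eigenCoeffs, dotProduct, Finset.sum_eq_single i (fun j _ hj => by
      rw [hA.eigenCoeffs_eq_zero_of_mulVec_eq_smul hw (hrepeat j hj), zero_mul]) (by simp)]
  have hwi : hA.eigenCoeffs w i ≠ 0 := by
    intro h
    apply hw₀
    rw [← dotProduct_self_eq_zero, hsum, h, zero_mul]
  rw [hsum, mul_eq_zero] at hy
  exact hy.resolve_left hwi

lemma le_dotProduct_aeval_mulVec_self {i₀ : V} {w : V → ℝ}
    (hw : A *ᵥ w = hA.eigenvalues i₀ • w) (hw₀ : w ≠ 0) {q : ℝ[X]} {l : ℝ}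
    (hl : ∀ i ≠ i₀, l ≤ q.eval (hA.eigenvalues i)) (x : V → ℝ) :
    l * (x ⬝ᵥ x) + (q.eval (hA.eigenvalues i₀) - l) * (w ⬝ᵥ x) ^ 2 / (w ⬝ᵥ w) ≤
      x ⬝ᵥ (aeval A q *ᵥ x) := by
  have hww : w ⬝ᵥ w ≠ 0 := dotProduct_self_eq_zero.not.mpr hw₀
  obtain ⟨t, hwx⟩ : ∃ t, w ⬝ᵥ x = t * (w ⬝ᵥ w) := ⟨_, (div_mul_cancel₀ _ hww).symm⟩
  obtain ⟨y, rfl⟩ : ∃ y, x = y + t • w := ⟨x - t • w, (sub_add_cancel x _).symm⟩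
  have hwy : w ⬝ᵥ y = 0 := by simpa [dotProduct_add, dotProduct_smul] using hwx
  have hMw := aeval_mulVec_of_mulVec_eq_smul hw q
  have hwMy : w ⬝ᵥ (aeval A q *ᵥ y) = 0 := by
    simp only [hA.dotProduct_aeval_mulVec, mul_comm (hA.eigenCoeffs w _)]
    rw [← hA.dotProduct_aeval_mulVec, hMw, dotProduct_smul, dotProduct_comm, hwy, smul_zero]
  have hcompl := hA.mul_dotProduct_self_le_of_dotProduct_eq_zero hw hw₀ hl hwy
  have hsq : (t * (w ⬝ᵥ w)) ^ 2 / (w ⬝ᵥ w) = t ^ 2 * (w ⬝ᵥ w) := by field_simp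
  rw [hwx, mul_div_assoc, hsq]
  simp only [mulVec_add, mulVec_smul, hMw, dotProduct_add, add_dotProduct, dotProduct_smul,
    smul_dotProduct, smul_eq_mul, hwMy, hwy, dotProduct_comm y w]
  linear_combination hcompl

end Matrix.IsHermitian

section IndicatorVector

variable {V R : Type*} [Fintype V] [DecidableEq V] [CommSemiring R]

lemma Matrix.ite_mem_dotProduct (U : Finset V) (z : V → R) :
    (fun v => if v ∈ U then 1 else 0) ⬝ᵥ z = ∑ u ∈ U, z u := by
  simp [dotProduct, Finset.sum_ite_mem]

lemma Matrix.sum_diag_eq_dotProduct_mulVec_of_offDiag_eq_zero {M : Matrix V V R} {U : Finset V}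
    (h : ∀ u ∈ U, ∀ v ∈ U, u ≠ v → M u v = 0) :
    ∑ u ∈ U, M u u =
      (fun v => if v ∈ U then 1 else 0) ⬝ᵥ (M *ᵥ fun v => if v ∈ U then 1 else 0) := by
  rw [ite_mem_dotProduct]
  refine Finset.sum_congr rfl fun u hu => ?_
  rw [mulVec, dotProduct_comm, ite_mem_dotProduct,
    Finset.sum_eq_single_of_mem u hu fun v hv hvu => h u hu v hv hvu.symm]

end IndicatorVector

namespace SimpleGraph

variable {V : Type*} [Fintype V] {G : SimpleGraph V} [DecidableRel G.Adj]

lemma IsRegularOfDegree.adjMatrix_mulVec_one {r : ℕ} (hreg : G.IsRegularOfDegree r) :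
    G.adjMatrix ℝ *ᵥ 1 = (r : ℝ) • 1 := by
  ext v
  simp [hreg v]

lemma IsRegularOfDegree.mem_spectrum [DecidableEq V] [Nonempty V] {r : ℕ}
    (hreg : G.IsRegularOfDegree r) : (r : ℝ) ∈ spectrum ℝ (G.adjMatrix ℝ) := by
  rw [← spectrum_toLin', ← Module.End.hasEigenvalue_iff_mem_spectrum]
  refine Module.End.hasEigenvalue_of_hasEigenvector (x := 1) ?_
  refine Module.End.hasEigenvector_iff.mpr ⟨Module.End.mem_eigenspace_iff.mpr ?_, one_ne_zero⟩
  simpa using hreg.adjMatrix_mulVec_one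

lemma IsRegularOfDegree.le_of_mem_spectrum [DecidableEq V] {r : ℕ} (hreg : G.IsRegularOfDegree r)
    {μ : ℝ} (hμ : μ ∈ spectrum ℝ (G.adjMatrix ℝ)) : μ ≤ r := by
  rw [← spectrum_toLin', ← Module.End.hasEigenvalue_iff_mem_spectrum] at hμ
  obtain ⟨v, hv⟩ := eigenvalue_mem_ball hμ
  have hrow : ∑ j ∈ Finset.univ.erase v, ‖G.adjMatrix ℝ v j‖ = r := by
    rw [Finset.sum_erase _ (by simp)]
    have := congrFun hreg.adjMatrix_mulVec_one v
    simp only [mulVec, dotProduct, Pi.one_apply, mul_one, Pi.smul_apply, smul_eq_mul] at this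
    rw [← this]
    refine Finset.sum_congr rfl fun j _ => ?_
    simp [adjMatrix_apply, apply_ite]
  rw [Metric.mem_closedBall, adjMatrix_apply, if_neg G.irrefl, hrow, Real.dist_eq,
    sub_zero] at hv
  exact (le_abs_self μ).trans hv

lemma aeval_adjMatrix_apply_eq_zero_of_natDegree_lt_dist [DecidableEq V] {R : Type*} [CommSemiring R] (p : R[X])
    {u v : V} (h : p.natDegree < G.dist u v) : aeval (G.adjMatrix R) p u v = 0 := by
  rw [aeval_eq_sum_range, Matrix.sum_apply]
  refine Finset.sum_eq_zero fun i hi => ?_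
  have hwalk : IsEmpty {q : G.Walk u v | q.length = i} :=
    ⟨fun ⟨q, hq⟩ => by
      have hq : q.length = i := hq
      have := dist_le q
      have := Finset.mem_range.mp hi
      omega⟩
  rw [Matrix.smul_apply, adjMatrix_pow_apply_eq_card_walk, Fintype.card_eq_zero, Nat.cast_zero,
    smul_zero]

lemma IsRegularOfDegree.le_dotProduct_aeval_adjMatrix_mulVec [DecidableEq V] [Nonempty V] {r : ℕ}
    (hreg : G.IsRegularOfDegree r) {lam : Fin (Fintype.card V) → ℝ} (hlam : Antitone lam)
    (hchar : (G.adjMatrix ℝ).charpoly = ∏ i, (X - C (lam i))) {p : ℝ[X]} {l : ℝ}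
    (hl : ∀ i ≠ ⟨0, Fintype.card_pos⟩, l ≤ p.eval (lam i)) (x : V → ℝ) :
    l * (x ⬝ᵥ x) + (p.eval (lam ⟨0, Fintype.card_pos⟩) - l) * (1 ⬝ᵥ x) ^ 2 / Fintype.card V ≤
      x ⬝ᵥ (aeval (G.adjMatrix ℝ) p *ᵥ x) := by
  have hA := G.isHermitian_adjMatrix ℝ
  set e : Fin (Fintype.card V) ≃ V := Fintype.equivOfCardEq (Fintype.card_fin _)
  have heig : ∀ i, hA.eigenvalues i = lam (e.symm i) := fun i => by
    rw [← hA.eigenvalues₀_eq_of_charpoly_eq_prod hlam hchar]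
    rfl
  have hspec : ∀ μ, μ ∈ spectrum ℝ (G.adjMatrix ℝ) ↔ ∃ i, lam i = μ := fun μ => by
    simp only [hA.spectrum_real_eq_range_eigenvalues, Set.mem_range, heig]
    exact (e.symm.surjective.exists (p := fun i => lam i = μ)).symm
  have htop : lam ⟨0, Fintype.card_pos⟩ = r := by
    obtain ⟨i, hi⟩ := (hspec r).mp hreg.mem_spectrum
    exact le_antisymm (hreg.le_of_mem_spectrum ((hspec _).mpr ⟨_, rfl⟩))
      (hi ▸ hlam (Fin.zero_le i))
  have hw : G.adjMatrix ℝ *ᵥ 1 = hA.eigenvalues (e ⟨0, Fintype.card_pos⟩) • 1 := by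
    rw [heig, e.symm_apply_apply, htop, hreg.adjMatrix_mulVec_one]
  have hl' : ∀ i ≠ e ⟨0, Fintype.card_pos⟩, l ≤ p.eval (hA.eigenvalues i) := fun i hi => by
    rw [heig]
    exact hl _ (by rwa [ne_eq, e.symm_apply_eq])
  have h := hA.le_dotProduct_aeval_mulVec_self hw one_ne_zero hl' x
  rwa [heig, e.symm_apply_apply, one_dotProduct_one] at h



lemma IsRegularOfDegree.le_sum_aeval_adjMatrix_diag [DecidableEq V] [Nonempty V] {r : ℕ}
    (hreg : G.IsRegularOfDegree r) {lam : Fin (Fintype.card V) → ℝ} (hlam : Antitone lam)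
    (hchar : (G.adjMatrix ℝ).charpoly = ∏ i, (X - C (lam i))) {k : ℕ} {p : ℝ[X]}
    (hp : p.natDegree ≤ k) {l : ℝ} (hl : ∀ i ≠ ⟨0, Fintype.card_pos⟩, l ≤ p.eval (lam i))
    {U : Finset V} (hU : ∀ u ∈ U, ∀ v ∈ U, u ≠ v → k < G.dist u v) :
    l * U.card + (p.eval (lam ⟨0, Fintype.card_pos⟩) - l) * U.card ^ 2 / Fintype.card V ≤
      ∑ u ∈ U, aeval (G.adjMatrix ℝ) p u u := by
  set x : V → ℝ := fun v => if v ∈ U then 1 else 0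
  have hxx : x ⬝ᵥ x = U.card := by simp [x, ite_mem_dotProduct]
  have h1x : 1 ⬝ᵥ x = U.card := by simp [x, dotProduct_comm 1, ite_mem_dotProduct]
  have h := hreg.le_dotProduct_aeval_adjMatrix_mulVec hlam hchar hl x
  rwa [hxx, h1x, ← sum_diag_eq_dotProduct_mulVec_of_offDiag_eq_zero fun u hu v hv huv =>
    aeval_adjMatrix_apply_eq_zero_of_natDegree_lt_dist p (hp.trans_lt (hU u hu v hv huv))] at h

end SimpleGraph

theorem ratio_type_bound_equality_average_diagonal_general
    {V : Type} [Fintype V] [DecidableEq V] [Nonempty V]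
    (G : SimpleGraph V) [DecidableRel G.Adj]
    (r : ℕ) (hreg : G.IsRegularOfDegree r)
    (lam : Fin (Fintype.card V) → ℝ)
    (hchar : (G.adjMatrix ℝ).charpoly = ∏ i, (Polynomial.X - Polynomial.C (lam i)))
    (hmono : ∀ i j : Fin (Fintype.card V), i ≤ j → lam j ≤ lam i)
    (k : ℕ) (p : Polynomial ℝ) (hp : p.natDegree ≤ k)
    (W lm : ℝ)
    (hW1 : ∀ u : V, (Polynomial.aeval (G.adjMatrix ℝ) p) u u ≤ W)
    (hlm1 : ∀ i : Fin (Fintype.card V), i ≠ ⟨0, Fintype.card_pos⟩ → lm ≤ p.eval (lam i))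
    (U : Finset V) (hUne : U.Nonempty)
    (hU : ∀ u ∈ U, ∀ v ∈ U, u ≠ v → k < G.dist u v)
    (heq : (U.card : ℝ) =
      (Fintype.card V : ℝ) * (W - lm) / (p.eval (lam ⟨0, Fintype.card_pos⟩) - lm)) :
    W = (1 / (U.card : ℝ)) * ∑ u ∈ U, (Polynomial.aeval (G.adjMatrix ℝ) p) u u := by
  set P := p.eval (lam ⟨0, Fintype.card_pos⟩)
  set M := Polynomial.aeval (G.adjMatrix ℝ) p
  have hm : (0 : ℝ) < U.card := by exact_mod_cast hUne.card_pos
  have hN : (0 : ℝ) < Fintype.card V := by exact_mod_cast Fintype.card_pos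
  have hP : P - lm ≠ 0 := fun h => by rw [h, div_zero] at heq; linarith
  have hlower : lm * U.card + (P - lm) * U.card ^ 2 / Fintype.card V ≤ ∑ u ∈ U, M u u :=
    hreg.le_sum_aeval_adjMatrix_diag hmono hchar hp hlm1 hU
  have hupper : ∑ u ∈ U, M u u ≤ U.card * W := by
    simpa using Finset.sum_le_sum fun u (_ : u ∈ U) => hW1 u
  have hequality : (P - lm) * U.card ^ 2 / Fintype.card V = (W - lm) * U.card := by
    rw [eq_div_iff hP] at heq
    rw [div_eq_iff hN.ne']
    linear_combination (U.card : ℝ) * heq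
  have hsum : ∑ u ∈ U, M u u = U.card * W := le_antisymm hupper (by linarith)
  rw [hsum]
  field_simp

/-- If equality holds in the Ratio-type bound for a `k`-independent set `U` of a
regular graph, then `W(p)` equals the average of the diagonal entries of `p(A)`
over `U`. -/
theorem ratio_type_bound_equality_average_diagonal
    {V : Type} [Fintype V] [DecidableEq V] [Nonempty V]
    (G : SimpleGraph V) [DecidableRel G.Adj]
    (r : ℕ) (hreg : G.IsRegularOfDegree r)
    (lam : Fin (Fintype.card V) → ℝ)
    (hchar : (G.adjMatrix ℝ).charpoly = ∏ i, (Polynomial.X - Polynomial.C (lam i)))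
    (hmono : ∀ i j : Fin (Fintype.card V), i ≤ j → lam j ≤ lam i)
    (k : ℕ) (p : Polynomial ℝ) (hp : p.natDegree ≤ k)
    (W lm : ℝ)
    (hW1 : ∀ u : V, (Polynomial.aeval (G.adjMatrix ℝ) p) u u ≤ W)
    (hW2 : ∃ u : V, (Polynomial.aeval (G.adjMatrix ℝ) p) u u = W)
    (hlm1 : ∀ i : Fin (Fintype.card V), i ≠ ⟨0, Fintype.card_pos⟩ → lm ≤ p.eval (lam i))
    (hlm2 : ∃ i : Fin (Fintype.card V), i ≠ ⟨0, Fintype.card_pos⟩ ∧ p.eval (lam i) = lm)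
    (U : Finset V) (hUne : U.Nonempty)
    (hU : ∀ u ∈ U, ∀ v ∈ U, u ≠ v → k < G.dist u v)
    (heq : (U.card : ℝ) =
      (Fintype.card V : ℝ) * (W - lm) / (p.eval (lam ⟨0, Fintype.card_pos⟩) - lm)) :
    W = (1 / (U.card : ℝ)) * ∑ u ∈ U, (Polynomial.aeval (G.adjMatrix ℝ) p) u u :=
  ratio_type_bound_equality_average_diagonal_general G r hreg lam hchar hmono k p hp W lm hW1 hlm1 U
    hUne hU heq
end

section
/- For two bilinear forms graphs Bil_q(n_1,m_1) and Bil_q(n_2,m_2) with t = 2, two eigenvalues θ_{j_1} + θ_{j_2} and θ_{j_1'} + θ_{j_2'} of the Cartesian product (where θ_j^{(i)} = ((q^{n_i−j}−1)(q^{m_i}−q^j) − q^j + 1)/(q−1) and (j_1,j_2) ≠ (j_1',j_2'), 0 ≤ j_i, j_i' ≤ n_i) coincide if and only if n_2 − n_1 + m_2 − m_1 = j_2 − j_1' = j_2' − j_1. -/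
/-! Clearing the common denominator `q - 1`, `θ_j(n, m) = (q^(n+m-j) - q^n - q^m + 1)/(q - 1)`,
so the two eigenvalue sums agree exactly when
`q^(n₁+m₁-j₁) + q^(n₂+m₂-j₂) = q^(n₁+m₁-j₁') + q^(n₂+m₂-j₂')`. For `q ≥ 2` a sum of two powers
of `q` determines its exponents up to order, and the pairs `(j₁, j₂) ≠ (j₁', j₂')` rule out the
matching that keeps the order. -/

namespace Nat

variable {q a b c d : ℕ}

theorem pow_add_pow_lt_pow_add_pow (hq : 2 ≤ q) (hab : a ≤ b) (hbd : b < d) :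
    q ^ a + q ^ b < q ^ c + q ^ d :=
  calc q ^ a + q ^ b ≤ q ^ b * 2 := by rw [mul_two]; gcongr; omega
    _ ≤ q ^ b * q := Nat.mul_le_mul_left _ hq
    _ = q ^ (b + 1) := (pow_succ q b).symm
    _ ≤ q ^ d := Nat.pow_le_pow_right (by omega) hbd
    _ < q ^ c + q ^ d := Nat.lt_add_of_pos_left (pow_pos (by omega) c)

theorem eq_and_eq_of_pow_add_pow_eq (hq : 2 ≤ q) (hab : a ≤ b) (hcd : c ≤ d)
    (h : q ^ a + q ^ b = q ^ c + q ^ d) : a = c ∧ b = d := by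
  obtain rfl : b = d := by
    rcases lt_trichotomy b d with hbd | hbd | hdb
    · exact absurd h (pow_add_pow_lt_pow_add_pow hq hab hbd).ne
    · exact hbd
    · exact absurd h (pow_add_pow_lt_pow_add_pow hq hcd hdb).ne'
  exact ⟨Nat.pow_right_injective hq (Nat.add_right_cancel h), rfl⟩

theorem pow_add_pow_eq_pow_add_pow_iff (hq : 2 ≤ q) :
    q ^ a + q ^ b = q ^ c + q ^ d ↔ a = c ∧ b = d ∨ a = d ∧ b = c := by
  refine ⟨fun h => ?_, by rintro (⟨rfl, rfl⟩ | ⟨rfl, rfl⟩) <;> ring⟩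
  rcases le_total a b with hab | hba <;> rcases le_total c d with hcd | hdc
  · exact .inl (eq_and_eq_of_pow_add_pow_eq hq hab hcd h)
  · exact .inr (eq_and_eq_of_pow_add_pow_eq hq hab hdc (h.trans (add_comm _ _)))
  · exact .inr (eq_and_eq_of_pow_add_pow_eq hq hba hcd ((add_comm _ _).trans h)).symm
  · exact .inl (eq_and_eq_of_pow_add_pow_eq hq hba hdc (by rw [add_comm, h, add_comm])).symm

end Nat

theorem bilinear_eigenvalue_numerator_eq {R : Type*} [CommRing R] (x : R) {n j : ℕ} (m : ℕ)
    (hj : j ≤ n) :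
    (x ^ (n - j) - 1) * (x ^ m - x ^ j) - x ^ j + 1 = x ^ (n + m - j) + (1 - x ^ n - x ^ m) := by
  have hnm : x ^ (n + m - j) = x ^ (n - j) * x ^ m := by rw [← pow_add]; congr 1; omega
  have hn : x ^ n = x ^ (n - j) * x ^ j := by rw [← pow_add]; congr 1; omega
  rw [hnm, hn]
  ring

theorem bilinear_forms_eigenvalue_coincidence_general
    (q n1 m1 n2 m2 : ℕ)
    (hq : ∃ p k : ℕ, p.Prime ∧ 0 < k ∧ q = p ^ k)
    (j1 j2 j1' j2' : ℕ)
    (hj1 : j1 ≤ n1) (hj2 : j2 ≤ n2) (hj1' : j1' ≤ n1) (hj2' : j2' ≤ n2)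
    (hne : (j1, j2) ≠ (j1', j2'))
    (theta : ℕ → ℕ → ℕ → ℝ)
    (htheta : ∀ n m j, theta n m j =
      (((q : ℝ) ^ (n - j) - 1) * ((q : ℝ) ^ m - (q : ℝ) ^ j)
        - (q : ℝ) ^ j + 1) / ((q : ℝ) - 1)) :
    theta n1 m1 j1 + theta n2 m2 j2 = theta n1 m1 j1' + theta n2 m2 j2' ↔
      ((n2 : ℤ) - n1 + m2 - m1 = (j2 : ℤ) - j1' ∧
        (j2 : ℤ) - j1' = (j2' : ℤ) - j1) := by
  have hq2 : 2 ≤ q := by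
    obtain ⟨p, k, hp, hk, rfl⟩ := hq
    exact Nat.one_lt_pow hk.ne' hp.one_lt
  have hden : (q : ℝ) - 1 ≠ 0 := sub_ne_zero.mpr (by exact_mod_cast (by omega : q ≠ 1))
  rw [htheta, htheta, htheta, htheta, bilinear_eigenvalue_numerator_eq _ _ hj1,
    bilinear_eigenvalue_numerator_eq _ _ hj2, bilinear_eigenvalue_numerator_eq _ _ hj1',
    bilinear_eigenvalue_numerator_eq _ _ hj2', ← add_div, ← add_div, div_left_inj' hden]
  simp only [add_add_add_comm _ (1 - _ - _ : ℝ), add_left_inj]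
  simp only [← Nat.cast_pow, ← Nat.cast_add, Nat.cast_inj,
    Nat.pow_add_pow_eq_pow_add_pow_iff hq2]
  rw [Ne, Prod.mk.injEq] at hne
  omega

/-- For the Cartesian product of two bilinear forms graphs `Bil_q(n₁,m₁)` and
`Bil_q(n₂,m₂)`, two eigenvalues `θ_{j₁} + θ_{j₂}` and `θ_{j₁'} + θ_{j₂'}`
corresponding to distinct pairs `(j₁,j₂) ≠ (j₁',j₂')` coincide if and only if
`n₂ − n₁ + m₂ − m₁ = j₂ − j₁' = j₂' − j₁`. -/
theorem bilinear_forms_eigenvalue_coincidence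
    (q n1 m1 n2 m2 : ℕ)
    (hq : ∃ p k : ℕ, p.Prime ∧ 0 < k ∧ q = p ^ k)
    (h1 : n1 ≤ m1) (h2 : n2 ≤ m2)
    (j1 j2 j1' j2' : ℕ)
    (hj1 : j1 ≤ n1) (hj2 : j2 ≤ n2) (hj1' : j1' ≤ n1) (hj2' : j2' ≤ n2)
    (hne : (j1, j2) ≠ (j1', j2'))
    (theta : ℕ → ℕ → ℕ → ℝ)
    (htheta : ∀ n m j, theta n m j =
      (((q : ℝ) ^ (n - j) - 1) * ((q : ℝ) ^ m - (q : ℝ) ^ j)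
        - (q : ℝ) ^ j + 1) / ((q : ℝ) - 1)) :
    theta n1 m1 j1 + theta n2 m2 j2 = theta n1 m1 j1' + theta n2 m2 j2' ↔
      ((n2 : ℤ) - n1 + m2 - m1 = (j2 : ℤ) - j1' ∧
        (j2 : ℤ) - j1' = (j2' : ℤ) - j1) :=
  bilinear_forms_eigenvalue_coincidence_general q n1 m1 n2 m2 hq j1 j2 j1' j2' hj1 hj2 hj1' hj2' hne
    theta htheta
end
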